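/- arXiv:0709.1235 — 2 statements merged into one kernel-verified Lean document; each statement's English description precedes it below -/
import Mathlib

section
/- Let 0 < α ≤ ∞ and let f be a real function on (-α,α). If f is S-positive of order 3, then f is continuous on (-α,α). -/
/-! Apply `f` to the Gram matrix of `u, w₁, w₂ ∈ ℝ²`, where `|w₁|² = |w₂|² = x` and
`⟨w₁, w₂⟩ = v`, and test it against `(k, 1, -1)`. This gives a quadratic in `k` that is
nonnegative everywhere. Its discriminant gives
`(f ⟨u, w₁⟩ - f ⟨u, w₂⟩)² ≤ 2 f(|u|²) (f x - f v)`.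
Degenerate choices of the vectors show that `f` is nonnegative and nondecreasing on `[0, α)`.
Near a continuity point `x > |c|` of this monotone function, `f x - f v` is as small as we like
for some `v ∈ (|c|, x)`. For `y` near `c`, the vector `u` with `⟨u, w₁⟩ = y` and
`⟨u, w₂⟩ = c` then has `|u|²` close to `2c² / (x + v) ≤ |c|`, so all entries stay in
`(-α, α)` and `f(|u|²)` stays bounded. -/

open Matrix

/-- `x` lies in the open interval `(-a, a)`, where `a ∈ (0, ∞]` is an extended real. -/
def MemI (a : EReal) (x : ℝ) : Prop := -a < (x : EReal) ∧ (x : EReal) < a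

/-- `x` lies in the open interval `(0, a)`. -/
def MemP (a : EReal) (x : ℝ) : Prop := 0 < x ∧ (x : EReal) < a

/-- All entries of the matrix `A` lie in `(-a, a)`. -/
def EntriesIn (a : EReal) {n : ℕ} (A : Matrix (Fin n) (Fin n) ℝ) : Prop :=
  ∀ i j, MemI a (A i j)

/-- `f` is S-positive (Schur positive) of order `n` on `(-a, a)`. -/
def SPos (a : EReal) (f : ℝ → ℝ) (n : ℕ) : Prop :=
  ∀ A : Matrix (Fin n) (Fin n) ℝ, EntriesIn a A → A.PosSemidef → (A.map f).PosSemidef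

/-- `f` is S-monotone (Schur monotone) of order `n` on `(-a, a)`. -/
def SMono (a : EReal) (f : ℝ → ℝ) (n : ℕ) : Prop :=
  ∀ A B : Matrix (Fin n) (Fin n) ℝ, A.IsSymm → B.IsSymm →
    EntriesIn a A → EntriesIn a B →
    B.PosSemidef → (A - B).PosSemidef →
    (A.map f - B.map f).PosSemidef

/-- `f` is S-convex (Schur convex) of order `n` on `(-a, a)`. -/
def SConv (a : EReal) (f : ℝ → ℝ) (n : ℕ) : Prop :=
  ∀ A B : Matrix (Fin n) (Fin n) ℝ, A.IsSymm → B.IsSymm →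
    EntriesIn a A → EntriesIn a B →
    B.PosSemidef → (A - B).PosSemidef →
    ∀ t : ℝ, 0 ≤ t → t ≤ 1 →
    (t • A.map f + (1 - t) • B.map f - (t • A + (1 - t) • B).map f).PosSemidef


open Set

lemma memI_iff_abs_lt {a : EReal} {x : ℝ} : MemI a x ↔ ((|x| : ℝ) : EReal) < a := by
  rw [MemI, abs_eq_max_neg, EReal.coe_strictMono.monotone.map_max, max_lt_iff, EReal.coe_neg,
    EReal.neg_lt_comm]
  exact and_comm

lemma memI_of_abs_le {a : EReal} {x y : ℝ} (hxy : |x| ≤ y) (hya : (y : EReal) < a) : MemI a x :=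
  memI_iff_abs_lt.2 ((EReal.coe_le_coe_iff.2 hxy).trans_lt hya)

lemma exists_sq_add_sq_sub_sq {x v : ℝ} (h : |v| < x) :
    ∃ p q : ℝ, 0 < p ∧ 0 < q ∧ p ^ 2 + q ^ 2 = x ∧ p ^ 2 - q ^ 2 = v := by
  obtain ⟨h₁, h₂⟩ := abs_lt.1 h
  refine ⟨√((x + v) / 2), √((x - v) / 2), Real.sqrt_pos.2 (by linarith),
    Real.sqrt_pos.2 (by linarith), ?_, ?_⟩ <;>
  rw [Real.sq_sqrt (by linarith), Real.sq_sqrt (by linarith)] <;> ring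

lemma MonotoneOn.exists_sub_lt {f : ℝ → ℝ} {b d η : ℝ} (hf : MonotoneOn f (Ioo b d))
    (hbd : b < d) (hη : 0 < η) : ∃ v x, b < v ∧ v < x ∧ x < d ∧ f x - f v < η := by
  obtain ⟨x, hx_cont, hx⟩ := (hf.countable_not_continuousWithinAt.dense_compl ℝ).exists_mem_open
    isOpen_Ioo (nonempty_Ioo.2 hbd)
  have hfx : ContinuousAt f x :=
    (not_not.1 fun h ↦ hx_cont ⟨hx, h⟩).continuousAt (isOpen_Ioo.mem_nhds hx)
  obtain ⟨v, hfv, hv⟩ := ((hfx.eventually (lt_mem_nhds (sub_lt_self (f x) hη))).filter_mono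
    nhdsWithin_le_nhds |>.and (Ioo_mem_nhdsLT hx.1)).exists
  exact ⟨v, x, hv.1, hv.2, hx.2, by linarith⟩

namespace SPos

variable {a : EReal} {f : ℝ → ℝ}

lemma quadratic_nonneg (h : SPos a f 3) {r m p q : ℝ}
    (hs : MemI a (r ^ 2 + m ^ 2)) (ht : MemI a (r * p + m * q)) (hu : MemI a (r * p - m * q))
    (hx : MemI a (p ^ 2 + q ^ 2)) (hv : MemI a (p ^ 2 - q ^ 2)) (k : ℝ) :
    0 ≤ f (r ^ 2 + m ^ 2) * (k * k) + 2 * (f (r * p + m * q) - f (r * p - m * q)) * k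
      + 2 * (f (p ^ 2 + q ^ 2) - f (p ^ 2 - q ^ 2)) := by
  set B : Matrix (Fin 2) (Fin 3) ℝ := !![r, p, p; m, q, -q]
  have hG : Bᴴ * B = !![r ^ 2 + m ^ 2, r * p + m * q, r * p - m * q;
      r * p + m * q, p ^ 2 + q ^ 2, p ^ 2 - q ^ 2;
      r * p - m * q, p ^ 2 - q ^ 2, p ^ 2 + q ^ 2] := by
    ext i j
    fin_cases i <;> fin_cases j <;> simp [B, Matrix.mul_apply, Fin.sum_univ_two] <;> ring
  have hE : EntriesIn a (Bᴴ * B) := by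
    rw [hG]
    intro i j
    fin_cases i <;> fin_cases j <;> assumption
  have := (h _ hE (posSemidef_conjTranspose_mul_self B)).dotProduct_mulVec_nonneg ![k, 1, -1]
  rw [hG] at this
  simp only [dotProduct, Pi.star_apply, star_trivial, mulVec, map_apply, of_apply, cons_val',
    cons_val_fin_one, Fin.sum_univ_three, Fin.isValue, cons_val_zero, cons_val_one, mul_one,
    cons_val, mul_neg, one_mul, neg_mul, neg_add_rev, neg_neg] at this
  linarith

lemma nonneg (h : SPos a f 3) {x : ℝ} (hx : 0 ≤ x) (hxa : (x : EReal) < a) : 0 ≤ f x := by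
  have h₀ : MemI a 0 := memI_of_abs_le (by simpa) hxa
  have hxI : MemI a x := memI_of_abs_le (abs_of_nonneg hx).le hxa
  have := h.quadratic_nonneg (r := √x) (m := 0) (p := 0) (q := 0)
    (by simpa [Real.sq_sqrt hx]) (by simpa) (by simpa) (by simpa) (by simpa) 1
  simpa [Real.sq_sqrt hx] using this

lemma apply_le_of_abs_lt (h : SPos a f 3) {x v : ℝ} (hvx : |v| < x) (hxa : (x : EReal) < a) :
    f v ≤ f x := by
  have hx : MemI a x := memI_of_abs_le (abs_of_pos ((abs_nonneg v).trans_lt hvx)).le hxa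
  have hv : MemI a v := memI_of_abs_le hvx.le hxa
  have h₀ : MemI a 0 := memI_of_abs_le (by simpa using (abs_nonneg v).trans hvx.le) hxa
  obtain ⟨p, q, -, -, rfl, rfl⟩ := exists_sq_add_sq_sub_sq hvx
  simpa using h.quadratic_nonneg (r := 0) (m := 0) (by simpa) (by simpa) (by simpa) hx hv 0

lemma sq_sub_le (h : SPos a f 3) {x v y c : ℝ} (hv : 0 < v) (hvx : v < x) (hx : MemI a x)
    (hy : MemI a y) (hc : MemI a c)
    (hs : MemI a ((y + c) ^ 2 / (2 * (x + v)) + (y - c) ^ 2 / (2 * (x - v)))) :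
    (f y - f c) ^ 2 ≤ 2 * f ((y + c) ^ 2 / (2 * (x + v)) + (y - c) ^ 2 / (2 * (x - v)))
      * (f x - f v) := by
  have hvI : MemI a v :=
    memI_of_abs_le (abs_le_abs_of_nonneg hv.le hvx.le) (memI_iff_abs_lt.1 hx)
  obtain ⟨p, q, hp, hq, rfl, rfl⟩ := exists_sq_add_sq_sub_sq (abs_lt.2 ⟨by linarith, hvx⟩)
  have ht : (y + c) / (2 * p) * p + (y - c) / (2 * q) * q = y := by field_simp; ring
  have hu : (y + c) / (2 * p) * p - (y - c) / (2 * q) * q = c := by field_simp; ring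
  have hrm : ((y + c) / (2 * p)) ^ 2 + ((y - c) / (2 * q)) ^ 2
      = (y + c) ^ 2 / (2 * (p ^ 2 + q ^ 2 + (p ^ 2 - q ^ 2)))
        + (y - c) ^ 2 / (2 * (p ^ 2 + q ^ 2 - (p ^ 2 - q ^ 2))) := by field_simp; ring
  have := discrim_le_zero <| h.quadratic_nonneg (r := (y + c) / (2 * p)) (m := (y - c) / (2 * q))
    (by rwa [hrm]) (by rwa [ht]) (by rwa [hu]) hx hvI
  rw [discrim, hrm, ht, hu] at this
  linarith

lemma continuousAt (h : SPos a f 3) {c : ℝ} (hc : MemI a c) : ContinuousAt f c := by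
  obtain ⟨x₀, hcx₀, hx₀a⟩ := EReal.exists_between_coe_real (memI_iff_abs_lt.1 hc)
  replace hcx₀ : |c| < x₀ := EReal.coe_lt_coe_iff.1 hcx₀
  have hmono : MonotoneOn f (Ioo |c| x₀) := fun y hy z hz hyz ↦ by
    obtain rfl | hyz := hyz.eq_or_lt
    · exact le_rfl
    · refine h.apply_le_of_abs_lt ?_ ((EReal.coe_lt_coe_iff.2 hz.2).trans hx₀a)
      rwa [abs_of_pos ((abs_nonneg c).trans_lt hy.1)]
  have hF : 0 ≤ f x₀ := h.nonneg ((abs_nonneg c).trans hcx₀.le) hx₀a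
  rw [Metric.continuousAt_iff']
  intro ε hε
  obtain ⟨v, x, hcv, hvx, hxx₀, hfxv⟩ :=
    hmono.exists_sub_lt hcx₀ (η := ε ^ 2 / (2 * f x₀ + 1)) (by positivity)
  have hv : 0 < v := (abs_nonneg c).trans_lt hcv
  set s : ℝ → ℝ := fun y ↦ (y + c) ^ 2 / (2 * (x + v)) + (y - c) ^ 2 / (2 * (x - v))
  have hsc : s c < x₀ := by
    have : 2 * c ^ 2 ≤ |c| * (x + v) := by nlinarith [abs_nonneg c, sq_abs c]
    calc s c = 2 * c ^ 2 / (x + v) := by simp only [s]; field_simp; ring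
      _ ≤ |c| := by rwa [div_le_iff₀ (by linarith)]
      _ < x₀ := hcx₀
  have hs : Continuous s := by fun_prop
  filter_upwards [hs.continuousAt.eventually (gt_mem_nhds hsc),
    continuous_abs.continuousAt.eventually (gt_mem_nhds hcx₀)] with y hsy hy
  have hs₀ : 0 ≤ s y :=
    add_nonneg (div_nonneg (sq_nonneg _) (by linarith)) (div_nonneg (sq_nonneg _) (by linarith))
  have hmem (z : ℝ) (hz : |z| < x₀) : MemI a z := memI_of_abs_le hz.le hx₀a
  have key := h.sq_sub_le hv hvx (hmem x (by rwa [abs_of_pos (hv.trans hvx)]))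
    (hmem y hy) (hmem c hcx₀) (hmem (s y) (by rwa [abs_of_nonneg hs₀]))
  have hfsy : f (s y) ≤ f x₀ := h.apply_le_of_abs_lt (by rwa [abs_of_nonneg hs₀]) hx₀a
  have hfvx : 0 ≤ f x - f v :=
    sub_nonneg.2 (hmono ⟨hcv, hvx.trans hxx₀⟩ ⟨hcv.trans hvx, hxx₀⟩ hvx.le)
  refine abs_lt_of_sq_lt_sq ?_ hε.le
  calc (f y - f c) ^ 2 ≤ 2 * f (s y) * (f x - f v) := key
    _ ≤ 2 * f x₀ * (ε ^ 2 / (2 * f x₀ + 1)) := by gcongr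
    _ < ε ^ 2 := by
      rw [mul_div_assoc', div_lt_iff₀ (by positivity)]
      nlinarith

end SPos

theorem stmt_5_general (a : EReal) (f : ℝ → ℝ) (h : SPos a f 3) :
    ContinuousOn f {x | MemI a x} :=
  fun _ hc ↦ (h.continuousAt hc).continuousWithinAt

/-- Proposition 2.5: if `f` is S-positive of order 3 on `(-α, α)`, then `f` is continuous
on `(-α, α)`. -/
theorem stmt_5 (a : EReal) (ha : 0 < a) (f : ℝ → ℝ) (h : SPos a f 3) :
    ContinuousOn f {x | MemI a x} :=
  stmt_5_general a f h
end

section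
/- Let 0 < α ≤ ∞ and let f be a real function on (-α,α) that is either even (f(-x) = f(x)) or odd (f(-x) = -f(x)). Suppose f is infinitely differentiable on (-α,α) and there exists N ∈ ℕ such that f^(k)(x) ≥ 0 for all x ∈ [0,α) and all k ≥ N. Then the Taylor series of f at 0, ∑_{k=0}^∞ (f^(k)(0)/k!) x^k, converges to f(x) for every x ∈ (-α,α). -/
open Matrix

/-! For `n ≥ N` the Taylor remainder `Rₙ` of `f` at `0` is nonnegative on `[0, α)`, since
`Rₙ⁽ⁿ⁾ = f⁽ⁿ⁾ ≥ 0` and the lower derivatives of `Rₙ` vanish at `0`; by a similar induction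
`n Rₙ(t) ≤ t Rₙ'(t)`, i.e. `Rₙ(t) / tⁿ` is nondecreasing (Bernstein). So for `0 ≤ x < b < α`,
`0 ≤ Rₙ(x) ≤ (x / b)ⁿ Rₙ(b) ≤ (x / b)ⁿ R_N(b) → 0`, the Taylor coefficients being nonnegative from
`N` on. Negative `x` reduce to `-x`: `f(-t) = c f(t)` forces `(-1)ᵏ f⁽ᵏ⁾(0) = c f⁽ᵏ⁾(0)`. -/

open Set Filter Topology
open scoped Nat

theorem hasSum_of_tendsto_sum_range_of_nonneg {f : ℕ → ℝ} {a : ℝ} {N : ℕ}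
    (hf : ∀ k, N ≤ k → 0 ≤ f k)
    (h : Tendsto (fun n ↦ ∑ k ∈ Finset.range n, f k) atTop (𝓝 a)) : HasSum f a := by
  rw [← hasSum_nat_add_iff' N, hasSum_iff_tendsto_nat_of_nonneg fun k ↦ hf _ (by omega)]
  convert (h.comp (tendsto_add_atTop_nat N)).sub_const (∑ k ∈ Finset.range N, f k) using 2
    with n
  simp only [Function.comp_apply, add_comm n N, Finset.sum_range_add_sub_sum_range]
  exact Finset.sum_congr rfl fun k _ ↦ by rw [add_comm]

theorem le_of_hasDerivAt_nonneg {F F' : ℝ → ℝ} {x y : ℝ} (hxy : x ≤ y)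
    (hF : ∀ t ∈ Icc x y, HasDerivAt F (F' t) t) (hF' : ∀ t ∈ Ioo x y, 0 ≤ F' t) :
    F x ≤ F y := by
  refine monotoneOn_of_hasDerivWithinAt_nonneg (f' := F') (convex_Icc x y)
    (fun t ht ↦ (hF t ht).continuousAt.continuousWithinAt) (fun t ht ↦ ?_) (fun t ht ↦ ?_)
    (left_mem_Icc.2 hxy) (right_mem_Icc.2 hxy) hxy
  all_goals rw [interior_Icc] at ht
  exacts [(hF t (Ioo_subset_Icc_self ht)).hasDerivWithinAt, hF' t ht]

theorem div_pow_le_div_pow_of_mul_le_mul_deriv {F : ℝ → ℝ} {n : ℕ} {x y : ℝ} (hx : 0 < x)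
    (hxy : x ≤ y) (hF : ∀ t ∈ Icc x y, DifferentiableAt ℝ F t)
    (h : ∀ t ∈ Icc x y, n * F t ≤ t * deriv F t) : F x / x ^ n ≤ F y / y ^ n := by
  refine le_of_hasDerivAt_nonneg hxy (fun t ht ↦ ((hF t ht).hasDerivAt.div (hasDerivAt_pow n t)
    (pow_ne_zero n (hx.trans_le ht.1).ne'))) fun t ht ↦ ?_
  have ht0 : 0 < t := hx.trans ht.1
  have hpow : t * (n * t ^ (n - 1)) = n * t ^ n := by
    rcases n with _ | n
    · simp
    · rw [Nat.add_sub_cancel, pow_succ]; ring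
  refine div_nonneg (nonneg_of_mul_nonneg_right ?_ ht0) (sq_nonneg _)
  calc (0 : ℝ) ≤ t ^ n * (t * deriv F t - n * F t) :=
        mul_nonneg (pow_nonneg ht0.le n) (sub_nonneg.2 (h t (Ioo_subset_Icc_self ht)))
    _ = t * (deriv F t * t ^ n - F t * (n * t ^ (n - 1))) := by
        linear_combination F t * hpow

/-- The Taylor polynomial of `g` at `0` of degree `n - 1`, i.e. its first `n` terms. -/
noncomputable def taylorSum (g : ℝ → ℝ) (n : ℕ) (x : ℝ) : ℝ :=
  ∑ k ∈ Finset.range n, iteratedDeriv k g 0 / k ! * x ^ k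

noncomputable def taylorRemainder (g : ℝ → ℝ) (n : ℕ) (x : ℝ) : ℝ := g x - taylorSum g n x

@[simp]
theorem taylorRemainder_zero (g : ℝ → ℝ) : taylorRemainder g 0 = g := by
  ext x; simp [taylorRemainder, taylorSum]

theorem taylorRemainder_succ_apply_zero (g : ℝ → ℝ) (n : ℕ) :
    taylorRemainder g (n + 1) 0 = 0 := by
  rw [taylorRemainder, taylorSum, Finset.sum_range_succ', Finset.sum_eq_zero fun k _ ↦ by simp]
  simp

theorem hasDerivAt_taylorSum_succ (g : ℝ → ℝ) (n : ℕ) (x : ℝ) :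
    HasDerivAt (taylorSum g (n + 1)) (taylorSum (deriv g) n x) x := by
  refine (HasDerivAt.fun_sum fun k _ ↦
    (hasDerivAt_pow k x).const_mul (iteratedDeriv k g 0 / k !)).congr_deriv ?_
  rw [Finset.sum_range_succ', taylorSum]
  simp only [CharP.cast_eq_zero, zero_mul, mul_zero, add_zero]
  refine Finset.sum_congr rfl fun k _ ↦ ?_
  rw [iteratedDeriv_succ', Nat.factorial_succ, Nat.add_sub_cancel]
  push_cast
  field_simp

theorem hasDerivAt_taylorRemainder_succ {g : ℝ → ℝ} {x : ℝ} (hg : DifferentiableAt ℝ g x)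
    (n : ℕ) : HasDerivAt (taylorRemainder g (n + 1)) (taylorRemainder (deriv g) n x) x :=
  hg.hasDerivAt.sub (hasDerivAt_taylorSum_succ g n x)

theorem differentiableAt_taylorRemainder {g : ℝ → ℝ} {x : ℝ} (hg : DifferentiableAt ℝ g x)
    (n : ℕ) : DifferentiableAt ℝ (taylorRemainder g n) x := by
  rcases n with _ | n
  · simpa using hg
  · exact (hasDerivAt_taylorRemainder_succ hg n).differentiableAt

section Remainder

variable {g : ℝ → ℝ} {b : ℝ} {n : ℕ}

theorem taylorRemainder_nonneg
    (hd : ∀ k, ∀ t ∈ Icc 0 b, DifferentiableAt ℝ (iteratedDeriv k g) t)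
    (hpos : ∀ k, n ≤ k → ∀ t ∈ Icc 0 b, 0 ≤ iteratedDeriv k g t) {t : ℝ} (ht : t ∈ Icc 0 b) :
    0 ≤ taylorRemainder g n t := by
  induction n generalizing g t with
  | zero => simpa using hpos 0 le_rfl t ht
  | succ n ih =>
    have hsub : Icc 0 t ⊆ Icc 0 b := Icc_subset_Icc_right ht.2
    rw [← taylorRemainder_succ_apply_zero g n]
    refine le_of_hasDerivAt_nonneg ht.1
      (fun s hs ↦ hasDerivAt_taylorRemainder_succ (by simpa using hd 0 s (hsub hs)) n)
      fun s hs ↦ ih (fun k ↦ by simpa only [iteratedDeriv_succ'] using hd (k + 1))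
        (fun k hk ↦ by simpa only [iteratedDeriv_succ'] using hpos (k + 1) (by omega))
        (hsub (Ioo_subset_Icc_self hs))

theorem natCast_mul_taylorRemainder_le
    (hd : ∀ k, ∀ t ∈ Icc 0 b, DifferentiableAt ℝ (iteratedDeriv k g) t)
    (hpos : ∀ k, n < k → ∀ t ∈ Icc 0 b, 0 ≤ iteratedDeriv k g t) {t : ℝ} (ht : t ∈ Icc 0 b) :
    n * taylorRemainder g n t ≤ t * deriv (taylorRemainder g n) t := by
  induction n generalizing g t with
  | zero =>
    simpa [iteratedDeriv_one] using mul_nonneg ht.1 (hpos 1 one_pos t ht)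
  | succ n ih =>
    have hsub : Icc 0 t ⊆ Icc 0 b := Icc_subset_Icc_right ht.2
    have hg : ∀ s ∈ Icc 0 b, DifferentiableAt ℝ g s := by simpa using hd 0
    have hd' : ∀ k, ∀ s ∈ Icc 0 b, DifferentiableAt ℝ (iteratedDeriv k (deriv g)) s :=
      fun k ↦ by simpa only [iteratedDeriv_succ'] using hd (k + 1)
    have hg' : ∀ s ∈ Icc 0 b, DifferentiableAt ℝ (deriv g) s := by simpa using hd' 0
    have hF := le_of_hasDerivAt_nonneg ht.1
      (F := fun s ↦ s * taylorRemainder (deriv g) n s - (n + 1) * taylorRemainder g (n + 1) s)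
      (fun s hs ↦ ((hasDerivAt_id s).mul
        (differentiableAt_taylorRemainder (hg' s (hsub hs)) n).hasDerivAt).sub
        ((hasDerivAt_taylorRemainder_succ (hg s (hsub hs)) n).const_mul _))
      fun s hs ↦ by
        have := ih hd'
          (fun k hk ↦ by simpa only [iteratedDeriv_succ'] using hpos (k + 1) (by omega))
          (hsub (Ioo_subset_Icc_self hs))
        simp only [id, one_mul]
        linarith
    rw [(hasDerivAt_taylorRemainder_succ (hg t ht) n).deriv]
    simp only [taylorRemainder_succ_apply_zero, mul_zero, sub_zero, zero_mul] at hF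
    push_cast
    linarith

end Remainder

section Convergence

variable {g : ℝ → ℝ} {b : ℝ}

theorem taylorRemainder_le_div_pow_mul {n : ℕ}
    (hd : ∀ k, ∀ t ∈ Icc 0 b, DifferentiableAt ℝ (iteratedDeriv k g) t)
    (hpos : ∀ k, n ≤ k → ∀ t ∈ Icc 0 b, 0 ≤ iteratedDeriv k g t) (hn : n ≠ 0) {x : ℝ}
    (hx : 0 ≤ x) (hxb : x ≤ b) :
    taylorRemainder g n x ≤ (x / b) ^ n * taylorRemainder g n b := by
  rcases hx.eq_or_lt with rfl | hx
  · obtain ⟨m, rfl⟩ := Nat.exists_eq_succ_of_ne_zero hn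
    simp [taylorRemainder_succ_apply_zero]
  have hratio := div_pow_le_div_pow_of_mul_le_mul_deriv hx hxb
    (fun t ht ↦ differentiableAt_taylorRemainder
      (by simpa using hd 0 t ⟨hx.le.trans ht.1, ht.2⟩) n)
    fun t ht ↦ natCast_mul_taylorRemainder_le hd (fun k hk ↦ hpos k hk.le)
      ⟨hx.le.trans ht.1, ht.2⟩
  have hb : 0 < b ^ n := pow_pos (hx.trans_le hxb) n
  rw [div_le_div_iff₀ (pow_pos hx n) hb] at hratio
  rw [div_pow, div_mul_eq_mul_div, le_div_iff₀ hb]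
  linarith

theorem taylorSum_le_taylorSum {m n : ℕ} (hmn : m ≤ n)
    (hc : ∀ k, m ≤ k → 0 ≤ iteratedDeriv k g 0) {x : ℝ} (hx : 0 ≤ x) :
    taylorSum g m x ≤ taylorSum g n x :=
  Finset.sum_le_sum_of_subset_of_nonneg (Finset.range_mono hmn) fun k _ hkm ↦
    mul_nonneg (div_nonneg (hc k (by simpa using hkm)) (by positivity)) (pow_nonneg hx k)

theorem hasSum_taylor_of_nonneg_of_lt {N : ℕ}
    (hd : ∀ k, ∀ t ∈ Icc 0 b, DifferentiableAt ℝ (iteratedDeriv k g) t)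
    (hpos : ∀ k, N ≤ k → ∀ t ∈ Icc 0 b, 0 ≤ iteratedDeriv k g t) {x : ℝ} (hx : 0 ≤ x)
    (hxb : x < b) : HasSum (fun k ↦ iteratedDeriv k g 0 / k ! * x ^ k) (g x) := by
  have hb : 0 < b := hx.trans_lt hxb
  have hc : ∀ k, N ≤ k → 0 ≤ iteratedDeriv k g 0 := fun k hk ↦ hpos k hk 0 ⟨le_rfl, hb.le⟩
  have hgeom : Tendsto (fun n ↦ (x / b) ^ n * taylorRemainder g N b) atTop (𝓝 0) := by
    simpa using (tendsto_pow_atTop_nhds_zero_of_lt_one (div_nonneg hx hb.le)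
      ((div_lt_one hb).2 hxb)).mul_const (taylorRemainder g N b)
  have hrem : Tendsto (fun n ↦ taylorRemainder g n x) atTop (𝓝 0) := by
    refine tendsto_of_tendsto_of_tendsto_of_le_of_le' tendsto_const_nhds hgeom ?_ ?_
    · filter_upwards [eventually_ge_atTop N] with n hn
      exact taylorRemainder_nonneg hd (fun k hk ↦ hpos k (hn.trans hk)) ⟨hx, hxb.le⟩
    · filter_upwards [eventually_ge_atTop N, eventually_ne_atTop 0] with n hn hn0
      calc taylorRemainder g n x ≤ (x / b) ^ n * taylorRemainder g n b :=
            taylorRemainder_le_div_pow_mul hd (fun k hk ↦ hpos k (hn.trans hk)) hn0 hx hxb.le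
        _ ≤ (x / b) ^ n * taylorRemainder g N b :=
            mul_le_mul_of_nonneg_left (sub_le_sub_left (taylorSum_le_taylorSum hn hc hb.le) _)
              (by positivity)
  refine hasSum_of_tendsto_sum_range_of_nonneg (N := N)
    (fun k hk ↦ mul_nonneg (div_nonneg (hc k hk) (by positivity)) (pow_nonneg hx k)) ?_
  simpa [taylorRemainder, taylorSum] using hrem.const_sub (g x)

end Convergence

theorem neg_one_pow_mul_iteratedDeriv_zero {f : ℝ → ℝ} {U : Set ℝ} {c : ℝ} (hU : IsOpen U)
    (h0 : 0 ∈ U) (hf : ∀ t ∈ U, f (-t) = c * f t) (k : ℕ) :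
    (-1) ^ k * iteratedDeriv k f 0 = c * iteratedDeriv k f 0 := by
  have h := iteratedDeriv_comp_neg k f 0
  rwa [Set.EqOn.iteratedDeriv_of_isOpen (g := fun t ↦ c * f t) hf hU k h0,
    iteratedDeriv_const_mul_field, neg_zero, smul_eq_mul, eq_comm] at h

theorem hasSum_taylor_neg_of_apply_neg_eq_mul {f : ℝ → ℝ} {U : Set ℝ} {c : ℝ} (hU : IsOpen U)
    (h0 : 0 ∈ U) (hf : ∀ t ∈ U, f (-t) = c * f t) {z : ℝ} (hz : z ∈ U)
    (h : HasSum (fun k ↦ iteratedDeriv k f 0 / k ! * z ^ k) (f z)) :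
    HasSum (fun k ↦ iteratedDeriv k f 0 / k ! * (-z) ^ k) (f (-z)) := by
  have hterm : (fun k ↦ iteratedDeriv k f 0 / k ! * (-z) ^ k) =
      fun k ↦ c * (iteratedDeriv k f 0 / k ! * z ^ k) := by
    funext k
    rw [neg_pow]
    linear_combination (z ^ k / k !) * neg_one_pow_mul_iteratedDeriv_zero hU h0 hf k
  rw [hterm, hf z hz]
  exact h.mul_left c

theorem differentiableAt_iteratedDeriv_of_contDiffOn {f : ℝ → ℝ} {U : Set ℝ} (hU : IsOpen U)
    (hf : ∀ k : ℕ, ContDiffOn ℝ k f U) (k : ℕ) {t : ℝ} (ht : t ∈ U) :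
    DifferentiableAt ℝ (iteratedDeriv k f) t :=
  (((hf (k + 1)).differentiableOn_iteratedDerivWithin (by norm_cast; omega) hU.uniqueDiffOn t
    ht).differentiableAt (hU.mem_nhds ht)).congr_of_eventuallyEq
    ((iteratedDerivWithin_of_isOpen hU).symm.eventuallyEq_of_mem (hU.mem_nhds ht))

theorem isOpen_setOf_memI (a : EReal) : IsOpen {x | MemI a x} :=
  isOpen_Ioo.preimage continuous_coe_real_ereal

theorem MemI.neg {a : EReal} {x : ℝ} (hx : MemI a x) : MemI a (-x) := by
  rw [MemI, EReal.coe_neg, EReal.neg_lt_comm, neg_neg, EReal.neg_lt_comm]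
  exact hx.symm

theorem memI_of_mem_Icc {a : EReal} (ha : 0 < a) {b t : ℝ} (hb : (b : EReal) < a)
    (ht : t ∈ Icc 0 b) : MemI a t :=
  ⟨(EReal.neg_lt_zero.2 ha).trans_le (EReal.coe_nonneg.2 ht.1),
    (EReal.coe_le_coe_iff.2 ht.2).trans_lt hb⟩

/-- Lemma 4.3: let `f` be an even or odd function on `(-α, α)` which is infinitely
differentiable there, and suppose `f⁽ᵏ⁾(x) ≥ 0` for all `x ∈ [0, α)` and all `k ≥ N` for
some `N`. Then the Taylor series of `f` at `0` converges to `f(x)` for every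
`x ∈ (-α, α)`. -/
theorem stmt_15 (a : EReal) (ha : 0 < a) (f : ℝ → ℝ)
    (hpar : (∀ x, MemI a x → f (-x) = f x) ∨ (∀ x, MemI a x → f (-x) = - f x))
    (hsmooth : ∀ k : ℕ, ContDiffOn ℝ k f {x | MemI a x})
    (N : ℕ)
    (hpos : ∀ k : ℕ, N ≤ k → ∀ x : ℝ, 0 ≤ x → (x : EReal) < a → 0 ≤ iteratedDeriv k f x) :
    ∀ x, MemI a x →
      HasSum (fun k : ℕ => (iteratedDeriv k f 0 / (Nat.factorial k : ℝ)) * x ^ k) (f x) := by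
  have hnonneg : ∀ x : ℝ, 0 ≤ x → (x : EReal) < a →
      HasSum (fun k ↦ iteratedDeriv k f 0 / k ! * x ^ k) (f x) := by
    intro x hx hxa
    obtain ⟨b, hxb, hba⟩ := EReal.lt_iff_exists_real_btwn.1 hxa
    exact hasSum_taylor_of_nonneg_of_lt
      (fun k t ht ↦ differentiableAt_iteratedDeriv_of_contDiffOn (isOpen_setOf_memI a) hsmooth k
        (memI_of_mem_Icc ha hba ht))
      (fun k hk t ht ↦ hpos k hk t ht.1 ((EReal.coe_le_coe_iff.2 ht.2).trans_lt hba)) hx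
      (EReal.coe_lt_coe_iff.1 hxb)
  obtain ⟨c, hc⟩ : ∃ c : ℝ, ∀ t, MemI a t → f (-t) = c * f t :=
    hpar.elim (fun h ↦ ⟨1, by simpa using h⟩) fun h ↦ ⟨-1, by simpa using h⟩
  intro x hx
  rcases le_or_gt 0 x with hx0 | hx0
  · exact hnonneg x hx0 hx.2
  · simpa using hasSum_taylor_neg_of_apply_neg_eq_mul (isOpen_setOf_memI a)
      (show MemI a 0 by simpa [MemI] using ha) hc hx.neg
      (hnonneg (-x) (by linarith) hx.neg.2)
end
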